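/- Let ℓ = α + γ + Σ_{m>0} s⁻¹G_m (with α ∈ 𝔤, γ ∈ 𝔥, G_m ∈ Ψ^{⊗m}) be a cocycle for the deformed differential d = δ + [ℓ₀, −] in 𝔏(f) lying in 𝔤 ⊕ 𝔥 ⊕ Γ̄₁. Then all components G_m for m ≥ 2 are determined by G₁ via G_m = Σ_{i=0}^{m-1} ψ₀^{⊗i} ⊗ G₁ ⊗ ψ₀^{⊗(m-1-i)}, where ψ₀ is the degree-0 element of Ψ corresponding to f. In particular, if G₁ = 0 then ℓ ∈ 𝔤 ⊕ 𝔥. -/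
import Mathlib


open scoped BigOperators

noncomputable section

/-- The sign `(-1)^e` associated to a parity `e : ZMod 2`. -/
def gsign (k : Type) [Field k] (e : ZMod 2) : k := if e = 0 then 1 else -1

/-- A super (ℤ/2-graded, with chosen parity function) vector space over `k`. -/
structure SuperSpace (k : Type) [Field k] where
  carrier : Type
  [acg : AddCommGroup carrier]
  [mod : Module k carrier]
  par : carrier → ZMod 2

attribute [instance] SuperSpace.acg SuperSpace.mod

variable {k : Type} [Field k]

/-- Total parity of a list of (homogeneous) elements. -/
def listPar (V : SuperSpace k) (l : List V.carrier) : ZMod 2 := (l.map V.par).sum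

/-- Compositions of `m` into `p` (possibly empty) ordered parts. -/
def comps (p m : ℕ) : Finset (Fin p → Fin (m + 1)) :=
  Finset.univ.filter fun c => (∑ i, ((c i : ℕ))) = m

def blockStart {p m : ℕ} (c : Fin p → Fin (m + 1)) (q : Fin p) : ℕ :=
  ∑ r ∈ Finset.univ.filter (fun r : Fin p => (r : ℕ) < (q : ℕ)), (c r : ℕ)

/-- The `q`-th block of `l` under the composition `c`. -/
def blockOf {p m : ℕ} {α : Type} (l : List α) (c : Fin p → Fin (m + 1)) (q : Fin p) :
    List α := (l.drop (blockStart c q)).take (c q)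

/-- Koszul sign of the shuffle interleaving the `u`-blocks and `v`-blocks. -/
def interSign (V : SuperSpace k) {p : ℕ} (ub vb : Fin p → List V.carrier) : ZMod 2 :=
  ∑ q : Fin p, (listPar V (vb q)) *
    ∑ r ∈ Finset.univ.filter (fun r : Fin p => (q : ℕ) < (r : ℕ)), listPar V (ub r)

/-- The assembled operation `b_p(u₁..u_m; v₁..v_n)` of a `B∞`-algebra, postcomposed with
a multilinear map `post : B^{⊗p} → B` (sums over all decompositions of `u` and `v` into
`p` ordered blocks, with Koszul signs). -/
def bpApply {N : Type} [AddCommGroup N] [Module k N]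
    (V : SuperSpace k) (b : ℕ → ℕ → List V.carrier → V.carrier)
    (post : List V.carrier → N) (p : ℕ) (u v : List V.carrier) : N :=
  ∑ cu ∈ comps p u.length, ∑ cv ∈ comps p v.length,
    gsign k (interSign V (blockOf u cu) (blockOf v cv)) •
      post (List.ofFn fun q : Fin p => b (cu q) (cv q) (blockOf u cu q ++ blockOf v cv q))

/-- The coderivation `d̂_p` cogenerated by `d_p`, postcomposed with a multilinear map. -/
def dhatThen {N : Type} [AddCommGroup N] [Module k N]
    (V : SuperSpace k) (d : ℕ → List V.carrier → V.carrier)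
    (post : List V.carrier → N) (p : ℕ) (l : List V.carrier) : N :=
  ∑ i ∈ Finset.range (l.length - p + 1),
    gsign k (listPar V (l.take i)) •
      post (l.take i ++ d p ((l.drop i).take p) :: l.drop (i + p))

/-- A `B∞`-algebra structure on `s⁻¹B`: operations `b_{m,n} : B^{⊗(m+n)} → B` of degree 0
and `d_m : B^{⊗m} → B` of degree 1, with `{d_m}` an `A∞`-structure, satisfying the
associativity and Leibniz equations.  Multilinear maps `B^{⊗n} → B` are encoded as
functions on lists of (homogeneous) elements, additive and `k`-linear in each slot. -/
structure BInfty (k : Type) [Field k] (V : SuperSpace k) where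
  b : ℕ → ℕ → List V.carrier → V.carrier
  d : ℕ → List V.carrier → V.carrier
  b_len : ∀ m n l, l.length ≠ m + n → b m n l = 0
  d_len : ∀ m l, l.length ≠ m → d m l = 0
  b_unit_left : ∀ x, b 1 0 [x] = x
  b_unit_right : ∀ x, b 0 1 [x] = x
  b_left_zero : ∀ m l, m ≠ 1 → b m 0 l = 0
  b_right_zero : ∀ m l, m ≠ 1 → b 0 m l = 0
  b_par : ∀ m n l, V.par (b m n l) = listPar V l
  d_par : ∀ m l, V.par (d m l) = listPar V l + 1
  b_add : ∀ m n pre x y post,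
    b m n (pre ++ (x + y) :: post) = b m n (pre ++ x :: post) + b m n (pre ++ y :: post)
  b_smul : ∀ m n pre (c : k) x post,
    b m n (pre ++ (c • x) :: post) = c • b m n (pre ++ x :: post)
  d_add : ∀ m pre x y post,
    d m (pre ++ (x + y) :: post) = d m (pre ++ x :: post) + d m (pre ++ y :: post)
  d_smul : ∀ m pre (c : k) x post,
    d m (pre ++ (c • x) :: post) = c • d m (pre ++ x :: post)
  assoc : ∀ u v w : List V.carrier,
    (∑ p ∈ Finset.Icc 1 (u.length + v.length),
      bpApply V b (fun t => b p w.length (t ++ w)) p u v) =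
    (∑ p ∈ Finset.Icc 1 (v.length + w.length),
      bpApply V b (fun t => b u.length p (u ++ t)) p v w)
  leibniz : ∀ u v : List V.carrier,
    (∑ p ∈ Finset.Icc 1 (u.length + v.length), bpApply V b (d p) p u v) =
    (∑ p ∈ Finset.Icc 1 u.length,
      dhatThen V d (fun t => b (u.length - p + 1) v.length (t ++ v)) p u) +
    gsign k (listPar V u) •
      (∑ p ∈ Finset.Icc 1 v.length,
        dhatThen V d (fun t => b u.length (v.length - p + 1) (u ++ t)) p v)
  ainfty : ∀ v : List V.carrier,
    (∑ p ∈ Finset.Icc 1 v.length, dhatThen V d (d (v.length + 1 - p)) p v) = 0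

end

noncomputable section

variable {k : Type} [Field k]

/-- The space of multilinear endomorphism operations `Hom(⊕_{m>0} W^{⊗m}, W)`,
encoded as functions on lists of homogeneous elements. -/
def Eop (W : SuperSpace k) : Type := List W.carrier → W.carrier

instance (W : SuperSpace k) : AddCommGroup (Eop W) := Pi.addCommGroup
instance (W : SuperSpace k) : Module k (Eop W) := Pi.module _ _ _

/-- Insertion composition `x ∘ ŷ` (restricted to cogenerators): `b_{1,1}(x, y)` of the
endomorphism `B∞`-algebra, i.e. composition of `x` with the coderivation cogenerated
by `y`, with Koszul signs governed by the parity function `pE`. -/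
def ins (W : SuperSpace k) (pE : Eop W → ZMod 2) (x y : Eop W) : Eop W := fun as =>
  ∑ i ∈ Finset.range (as.length + 1), ∑ j ∈ Finset.Icc (i + 1) as.length,
    gsign k (pE y * listPar W (as.take i)) •
      x (as.take i ++ y ((as.drop i).take (j - i)) :: as.drop j)

/-- The Gerstenhaber-type bracket `[x,y] = b_{1,1}(x,y) + (−1)^{xy+1} b_{1,1}(y,x)`. -/
def gBr (W : SuperSpace k) (pE : Eop W → ZMod 2) (x y : Eop W) : Eop W :=
  ins W pE x y - gsign k (pE x * pE y) • ins W pE y x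

end

noncomputable section

variable {k : Type} [Field k]

/-- The space `Ψ = ∏_{m>0} Hom((sA)^{⊗m}, sB)`, encoded as functions on lists. -/
def PsiOp (A B : SuperSpace k) : Type := List A.carrier → B.carrier

instance (A B : SuperSpace k) : AddCommGroup (PsiOp A B) := Pi.addCommGroup
instance (A B : SuperSpace k) : Module k (PsiOp A B) := Pi.module _ _ _

/-- Total parity of a list of elements of `Ψ`. -/
def psiListPar {A B : SuperSpace k} (pΨ : PsiOp A B → ZMod 2) (t : List (PsiOp A B)) :
    ZMod 2 := (t.map pΨ).sum

/-- Precomposition `ψ ∘ α̂` of `ψ ∈ Ψ` with the coderivation cogenerated by `α ∈ 𝔤`. -/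
def psiIns {A B : SuperSpace k} (pg : Eop A → ZMod 2) (ψ : PsiOp A B) (α : Eop A) :
    PsiOp A B := fun as =>
  ∑ i ∈ Finset.range (as.length + 1), ∑ j ∈ Finset.Icc (i + 1) as.length,
    gsign k (pg α * listPar A (as.take i)) •
      ψ (as.take i ++ α ((as.drop i).take (j - i)) :: as.drop j)

/-- Composition `γ ∘ (ψ₁ ⊗ … ⊗ ψ_m)` of `γ ∈ 𝔥` with a tensor of elements of `Ψ`. -/
def gammaComp {A B : SuperSpace k} (pΨ : PsiOp A B → ZMod 2) (γ : Eop B)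
    (ψs : List (PsiOp A B)) : PsiOp A B := fun as =>
  ∑ c ∈ comps ψs.length as.length,
    gsign k (∑ q : Fin ψs.length,
      pΨ (ψs.getD (q : ℕ) 0) * listPar A (as.take (blockStart c q))) •
      γ (List.ofFn fun q : Fin ψs.length => ψs.getD (q : ℕ) 0 (blockOf as c q))

end

noncomputable section

variable {k : Type} [Field k]

/-- Basis monomials of the cobar construction `Γ` of `T^c(Ψ)`: lists of blocks of
elements of `Ψ` (each block a basis tensor of `T^c(Ψ)`, desuspended). -/
abbrev GBasis (A B : SuperSpace k) : Type := List (List (PsiOp A B))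

/-- The completed cobar construction `Γ̄` of `T^c(Ψ)`, graded by the total number of
`Ψ`-factors (completion with respect to the filtration by tensor powers of `Ψ`). -/
abbrev GBar (k : Type) [Field k] (A B : SuperSpace k) : Type :=
  ℕ → (GBasis A B →₀ k)

/-- Parity of a basis monomial of `Γ̄` (each desuspended block contributes `1`). -/
def bparG {A B : SuperSpace k} (pΨ : PsiOp A B → ZMod 2) (t : GBasis A B) : ZMod 2 :=
  (t.map (psiListPar pΨ)).sum + (t.length : ZMod 2)

/-- Total number of `Ψ`-factors in a basis monomial. -/
def countG {A B : SuperSpace k} (t : GBasis A B) : ℕ := (t.map List.length).sum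

/-- The cobar differential `δ` on basis monomials: splitting of single blocks,
`δ(s⁻¹(ψ₁..ψ_n)) = Σ (−1)^{ψ₁+…+ψ_i+1} s⁻¹(ψ₁..ψ_i) ⊗ s⁻¹(ψ_{i+1}..ψ_n)`. -/
def deltaB {A B : SuperSpace k} (pΨ : PsiOp A B → ZMod 2) (t : GBasis A B) :
    GBasis A B →₀ k :=
  ∑ j ∈ Finset.range t.length, ∑ i ∈ Finset.Ico 1 (t.getD j []).length,
    gsign k (((t.take j).map (fun b => psiListPar pΨ b + 1)).sum +
        psiListPar pΨ ((t.getD j []).take i) + 1) •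
      Finsupp.single
        (t.take j ++ ((t.getD j []).take i) :: ((t.getD j []).drop i) :: t.drop (j + 1))
        (1 : k)

/-- The cobar differential `δ` on `Γ̄`. -/
def deltaE {A B : SuperSpace k} (pΨ : PsiOp A B → ZMod 2) (F : GBar k A B) :
    GBar k A B := fun n => (F n).sum fun t c => c • deltaB pΨ t

/-- The (concatenation) product of the cobar construction on `Γ̄`. -/
def mulG {A B : SuperSpace k} (F G : GBar k A B) : GBar k A B := fun n =>
  ∑ m ∈ Finset.range (n + 1), (F m).sum fun t c => (G (n - m)).sum
    fun t' c' => Finsupp.single (t ++ t') (c * c')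

/-- The product `F·G` twisted by the sign `(−1)^{|F|}` (basis-wise). -/
def smulMulG {A B : SuperSpace k} (pΨ : PsiOp A B → ZMod 2) (F G : GBar k A B) :
    GBar k A B := fun n =>
  ∑ m ∈ Finset.range (n + 1), (F m).sum fun t c => (G (n - m)).sum
    fun t' c' => (gsign k (bparG pΨ t) * c * c') • Finsupp.single (t ++ t') (1 : k)

/-- The modified right action of `α ∈ 𝔤` on a basis monomial of `Γ̄`
(composition with the coderivation `α̂`, with the extra sign `(−1)^α`). -/
def actGB {A B : SuperSpace k} (pg : Eop A → ZMod 2) (pΨ : PsiOp A B → ZMod 2)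
    (t : GBasis A B) (α : Eop A) : GBasis A B →₀ k :=
  ∑ j ∈ Finset.range t.length, ∑ i ∈ Finset.range (t.getD j []).length,
    gsign k (pg α * (psiListPar pΨ ((t.getD j []).drop (i + 1)) +
        ((t.drop (j + 1)).map (fun b => psiListPar pΨ b + 1)).sum) + pg α) •
      Finsupp.single
        (t.take j ++ ((t.getD j []).take i ++
          psiIns pg ((t.getD j []).getD i 0) α :: (t.getD j []).drop (i + 1)) ::
            t.drop (j + 1)) (1 : k)

/-- Right action of `𝔤` on `Γ̄`. -/
def actG {A B : SuperSpace k} (pg : Eop A → ZMod 2) (pΨ : PsiOp A B → ZMod 2)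
    (F : GBar k A B) (α : Eop A) : GBar k A B :=
  fun n => (F n).sum fun t c => c • actGB pg pΨ t α

/-- Right action of `𝔤` on `Γ̄`, twisted basis-wise by `(−1)^{|F|}`. -/
def sActG {A B : SuperSpace k} (pg : Eop A → ZMod 2) (pΨ : PsiOp A B → ZMod 2)
    (F : GBar k A B) (α : Eop A) : GBar k A B :=
  fun n => (F n).sum fun t c => (gsign k (bparG pΨ t) * c) • actGB pg pΨ t α

/-- The left action of `γ ∈ 𝔥` on a basis monomial of `Γ̄`
(postcomposition over consecutive runs inside blocks). -/
def actHB {A B : SuperSpace k} (ph : Eop B → ZMod 2) (pΨ : PsiOp A B → ZMod 2)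
    (γ : Eop B) (t : GBasis A B) : GBasis A B →₀ k :=
  ∑ j ∈ Finset.range t.length, ∑ i ∈ Finset.range ((t.getD j []).length + 1),
    ∑ jj ∈ Finset.Icc (i + 1) (t.getD j []).length,
      gsign k (ph γ * (((t.take j).map (fun b => psiListPar pΨ b + 1)).sum +
          psiListPar pΨ ((t.getD j []).take i))) •
        Finsupp.single
          (t.take j ++ ((t.getD j []).take i ++
            gammaComp pΨ γ (((t.getD j []).drop i).take (jj - i)) ::
              (t.getD j []).drop jj) :: t.drop (j + 1)) (1 : k)

/-- Left action of `𝔥` on `Γ̄`. -/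
def actH {A B : SuperSpace k} (ph : Eop B → ZMod 2) (pΨ : PsiOp A B → ZMod 2)
    (γ : Eop B) (F : GBar k A B) : GBar k A B :=
  fun n => (F n).sum fun t c => c • actHB ph pΨ γ t

/-- The group-like series `Σ_{m>0} s⁻¹(ψ)^{⊗m} ∈ Γ̄₁` attached to `ψ ∈ Ψ`. -/
def expPsi {A B : SuperSpace k} (ψ : PsiOp A B) : GBar k A B := fun n =>
  if n = 0 then 0 else Finsupp.single [List.replicate n ψ] 1

/-- The underlying space of the dg Lie algebra `𝔏(A,B) = Γ̄ ⊕ 𝔤 ⊕ 𝔥`. -/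
abbrev DefL (k : Type) [Field k] (A B : SuperSpace k) : Type :=
  Eop A × Eop B × GBar k A B

/-- `γ ∘ ψ̃` corestricted to cogenerators. -/
def gammaPsiAll {A B : SuperSpace k} (pΨ : PsiOp A B → ZMod 2) (γ : Eop B)
    (ψ : PsiOp A B) : PsiOp A B := fun as =>
  ∑ p ∈ Finset.Icc 1 as.length, gammaComp pΨ γ (List.replicate p ψ) as

/-- `(α, γ, ψ)` is an `A∞`-structure: `α̂² = 0`, `γ̂² = 0` and `ψ̃∘α̂ = γ̂∘ψ̃`
(an `A∞`-structure on `A` and on `B` and an `A∞`-morphism between them). -/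
def AinfTriple {A B : SuperSpace k} (pg : Eop A → ZMod 2) (ph : Eop B → ZMod 2)
    (pΨ : PsiOp A B → ZMod 2) (α : Eop A) (γ : Eop B) (ψ : PsiOp A B) : Prop :=
  pg α = 1 ∧ ph γ = 1 ∧ pΨ ψ = 0 ∧
  ins A pg α α = 0 ∧ ins B ph γ γ = 0 ∧
  psiIns pg ψ α = gammaPsiAll pΨ γ ψ

/-- `F ∈ Γ̄` is homogeneous of parity `ε` and compatible with the grading by `Ψ`-powers. -/
def homogG {A B : SuperSpace k} (pΨ : PsiOp A B → ZMod 2) (F : GBar k A B)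
    (ε : ZMod 2) : Prop :=
  ∀ n, ∀ t ∈ (F n).support, bparG pΨ t = ε ∧ countG t = n

/-- The Maurer–Cartan equation `δ(ℓ) + ½[ℓ,ℓ] = 0` in `𝔏(A,B)` for a degree-1 element
`ℓ = α + γ + F`. -/
def MCeq {A B : SuperSpace k} (pg : Eop A → ZMod 2) (ph : Eop B → ZMod 2)
    (pΨ : PsiOp A B → ZMod 2) (ℓ : DefL k A B) : Prop :=
  ins A pg ℓ.1 ℓ.1 = 0 ∧ ins B ph ℓ.2.1 ℓ.2.1 = 0 ∧
  deltaE pΨ ℓ.2.2 + mulG ℓ.2.2 ℓ.2.2 + actH ph pΨ ℓ.2.1 ℓ.2.2 +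
    actG pg pΨ ℓ.2.2 ℓ.1 = 0

/-- The differential `d = δ + [ℓ₀, −]` of `𝔏(f)`, for `ℓ₀ = α₀ + γ₀ + G₀`. -/
def dL {A B : SuperSpace k} (pg : Eop A → ZMod 2) (ph : Eop B → ZMod 2)
    (pΨ : PsiOp A B → ZMod 2) (α₀ : Eop A) (γ₀ : Eop B) (G₀ : GBar k A B)
    (x : DefL k A B) : DefL k A B :=
  (gBr A pg α₀ x.1, gBr B ph γ₀ x.2.1,
    deltaE pΨ x.2.2 + (mulG G₀ x.2.2 - smulMulG pΨ x.2.2 G₀) +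
      actH ph pΨ γ₀ x.2.2 - sActG pg pΨ x.2.2 α₀ +
      actG pg pΨ G₀ x.1 - gsign k (ph x.2.1) • actH ph pΨ x.2.1 G₀)

/-- Membership in the subalgebra `ℌ = {H ∈ 𝔤 ⊕ 𝔥 : [g₀, H] = 0}`. -/
def Hmem {A B : SuperSpace k} (pg : Eop A → ZMod 2) (ph : Eop B → ZMod 2)
    (pΨ : PsiOp A B → ZMod 2) (G₀ : GBar k A B) (x : Eop A × Eop B) : Prop :=
  actG pg pΨ G₀ x.1 - gsign k (ph x.2) • actH ph pΨ x.2 G₀ = 0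

/-- Inclusion `𝔤 ⊕ 𝔥 → 𝔏(A,B)`. -/
def inclGH {A B : SuperSpace k} (x : Eop A × Eop B) : DefL k A B :=
  (x.1, x.2, fun _ => 0)

end
noncomputable section Helpers
variable {k : Type} [Field k] {A B : SuperSpace k}

lemma gsign_mul_self (e : ZMod 2) : gsign k e * gsign k e = 1 := by
  unfold gsign; split <;> simp

lemma gsign_ne_zero (e : ZMod 2) : gsign k e ≠ 0 := by
  unfold gsign; split <;> simp

lemma gsign_one : gsign k (1 : ZMod 2) = -1 := by
  unfold gsign; norm_num [(by decide : (1 : ZMod 2) ≠ 0)]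

lemma countG_pair (b : List (PsiOp A B)) : countG [b] = b.length := by
  simp [countG]

lemma psiListPar_single (pΨ : PsiOp A B → ZMod 2) (ψ : PsiOp A B) :
    psiListPar pΨ [ψ] = pΨ ψ := by simp [psiListPar]

lemma fsum_pick {α : Type} [DecidableEq α] (f : α →₀ k) (a : α) (c : k) :
    (∑ t ∈ f.support, if t = a then c * f t else 0) = c * f a := by
  rw [Finset.sum_ite_eq' f.support a (fun t => c * f t)]
  split
  · rfl
  · rw [Finsupp.notMem_support_iff.mp ‹_›, mul_zero]

lemma append_singleton_eq_pair {α : Type} (t : List α) (x a b : α) :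
    t ++ [x] = [a, b] ↔ t = [a] ∧ x = b := by
  rcases t with _ | ⟨c, _ | ⟨d, r⟩⟩
  · simp
  · simp
  · constructor
    · intro h
      have hl := congrArg List.length h
      simp at hl
    · rintro ⟨h, -⟩; simp at h

lemma replicate_eq_single {α : Type} (m : ℕ) (x a : α) :
    List.replicate m x = [a] ↔ m = 1 ∧ x = a := by
  constructor
  · intro h
    have hl := congrArg List.length h
    simp at hl
    subst hl
    simp [List.replicate_one] at h
    exact ⟨rfl, h⟩
  · rintro ⟨rfl, rfl⟩; simp [List.replicate_one]

end Helpers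
noncomputable section Vanish
variable {k : Type} [Field k] {A B : SuperSpace k}

lemma actGB_apply_ne (pg : Eop A → ZMod 2) (pΨ : PsiOp A B → ZMod 2)
    (t : GBasis A B) (α : Eop A) (t₀ : GBasis A B) (h : t₀.length ≠ t.length) :
    actGB (k := k) pg pΨ t α t₀ = 0 := by
  classical
  unfold actGB
  rw [Finsupp.finset_sum_apply]
  refine Finset.sum_eq_zero fun j hj => ?_
  rw [Finsupp.finset_sum_apply]
  refine Finset.sum_eq_zero fun i hi => ?_
  rw [Finsupp.smul_apply, Finsupp.single_apply, if_neg, smul_zero]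
  intro he
  apply h
  rw [← he]
  have := Finset.mem_range.mp hj
  simp only [List.length_append, List.length_take, List.length_cons, List.length_drop]
  omega

lemma actHB_apply_ne (ph : Eop B → ZMod 2) (pΨ : PsiOp A B → ZMod 2)
    (γ : Eop B) (t : GBasis A B) (t₀ : GBasis A B) (h : t₀.length ≠ t.length) :
    actHB (k := k) ph pΨ γ t t₀ = 0 := by
  classical
  unfold actHB
  rw [Finsupp.finset_sum_apply]
  refine Finset.sum_eq_zero fun j hj => ?_
  rw [Finsupp.finset_sum_apply]
  refine Finset.sum_eq_zero fun i hi => ?_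
  rw [Finsupp.finset_sum_apply]
  refine Finset.sum_eq_zero fun jj hjj => ?_
  rw [Finsupp.smul_apply, Finsupp.single_apply, if_neg, smul_zero]
  intro he
  apply h
  rw [← he]
  have := Finset.mem_range.mp hj
  simp only [List.length_append, List.length_take, List.length_cons, List.length_drop]
  omega

lemma expPsi_support (ψ₀ : PsiOp A B) (n : ℕ) :
    ∀ t ∈ ((expPsi ψ₀ : GBar k A B) n).support, t.length = 1 ∧ countG t = n := by
  intro t ht
  unfold expPsi at ht
  split at ht
  · simp at ht
  · have := Finsupp.support_single_subset ht
    simp at this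
    subst this
    simp [countG]

lemma actG_apply_two (pg : Eop A → ZMod 2) (pΨ : PsiOp A B → ZMod 2)
    (F : GBar k A B) (α : Eop A) (n : ℕ)
    (hF : ∀ t ∈ (F n).support, t.length = 1) (t₀ : GBasis A B) (h : t₀.length = 2) :
    actG pg pΨ F α n t₀ = 0 := by
  unfold actG
  rw [Finsupp.sum_apply, Finsupp.sum]
  refine Finset.sum_eq_zero fun t ht => ?_
  rw [Finsupp.smul_apply, actGB_apply_ne _ _ _ _ _ (by rw [h, hF t ht]; omega), smul_zero]

lemma sActG_apply_two (pg : Eop A → ZMod 2) (pΨ : PsiOp A B → ZMod 2)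
    (F : GBar k A B) (α : Eop A) (n : ℕ)
    (hF : ∀ t ∈ (F n).support, t.length = 1) (t₀ : GBasis A B) (h : t₀.length = 2) :
    sActG pg pΨ F α n t₀ = 0 := by
  unfold sActG
  rw [Finsupp.sum_apply, Finsupp.sum]
  refine Finset.sum_eq_zero fun t ht => ?_
  rw [Finsupp.smul_apply, actGB_apply_ne _ _ _ _ _ (by rw [h, hF t ht]; omega), smul_zero]

lemma actH_apply_two (ph : Eop B → ZMod 2) (pΨ : PsiOp A B → ZMod 2)
    (γ : Eop B) (F : GBar k A B) (n : ℕ)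
    (hF : ∀ t ∈ (F n).support, t.length = 1) (t₀ : GBasis A B) (h : t₀.length = 2) :
    actH ph pΨ γ F n t₀ = 0 := by
  unfold actH
  rw [Finsupp.sum_apply, Finsupp.sum]
  refine Finset.sum_eq_zero fun t ht => ?_
  rw [Finsupp.smul_apply, actHB_apply_ne _ _ _ _ _ (by rw [h, hF t ht]; omega), smul_zero]

end Vanish
noncomputable section Coeff
variable {k : Type} [Field k] {A B : SuperSpace k}

open Classical in
lemma deltaB_pair (pΨ : PsiOp A B → ZMod 2) (b : List (PsiOp A B))
    (ψ : PsiOp A B) (v : List (PsiOp A B)) (hv : v ≠ []) :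
    deltaB pΨ [b] [[ψ], v] = if b = ψ :: v then gsign k (pΨ ψ + 1) else 0 := by
  unfold deltaB
  rw [Finsupp.finset_sum_apply]
  simp only [List.length_singleton]
  rw [Finset.sum_range_one]
  rw [Finsupp.finset_sum_apply]
  simp only [List.getD_cons_zero, List.take_zero, List.drop_succ_cons, List.drop_nil,
    List.nil_append, List.map_nil, List.sum_nil, zero_add]
  by_cases hb : b = ψ :: v
  · subst hb
    rw [if_pos rfl]
    rw [Finset.sum_eq_single 1]
    · simp only [List.take_cons, List.take_zero, List.drop_succ_cons, List.drop_zero,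
        Finsupp.smul_apply, Finsupp.single_apply, if_pos rfl, psiListPar_single]
      simp [smul_eq_mul, psiListPar_single]
    · intro i hi hne
      rw [Finsupp.smul_apply, Finsupp.single_apply, if_neg, smul_zero]
      intro he
      apply hne
      have h1 : (ψ :: v).take i = [ψ] := (List.cons.injEq _ _ _ _).mp he |>.1
      have hlen := congrArg List.length h1
      simp only [List.length_take, List.length_singleton, List.length_cons, List.length_nil] at hlen
      rcases Finset.mem_Ico.mp hi with ⟨h2, h3⟩
      simp only [List.length_cons] at h3
      omega
    · intro hmem
      exfalso
      apply hmem
      rw [Finset.mem_Ico]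
      rcases v with _ | ⟨a, v'⟩
      · exact absurd rfl hv
      · simp
  · rw [if_neg hb]
    refine Finset.sum_eq_zero fun i hi => ?_
    rw [Finsupp.smul_apply, Finsupp.single_apply, if_neg, smul_zero]
    intro he
    apply hb
    have h1 : b.take i = [ψ] := (List.cons.injEq _ _ _ _).mp he |>.1
    have h2 : b.drop i = v := by
      have := (List.cons.injEq _ _ _ _).mp he |>.2
      exact (List.cons.injEq _ _ _ _).mp this |>.1
    rw [← List.take_append_drop i b, h1, h2]
    rfl

lemma deltaE_coeff (pΨ : PsiOp A B → ZMod 2) (F : GBar k A B) (n : ℕ)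
    (hF : ∀ t ∈ (F n).support, t.length = 1)
    (ψ : PsiOp A B) (v : List (PsiOp A B)) (hv : v ≠ []) :
    deltaE pΨ F n [[ψ], v] = gsign k (pΨ ψ + 1) * F n [ψ :: v] := by
  classical
  unfold deltaE
  rw [Finsupp.sum_apply, Finsupp.sum]
  rw [← fsum_pick (F n) [ψ :: v] (gsign k (pΨ ψ + 1))]
  refine Finset.sum_congr rfl fun t ht => ?_
  rcases List.length_eq_one_iff.mp (hF t ht) with ⟨b, rfl⟩
  rw [Finsupp.smul_apply, deltaB_pair pΨ b ψ v hv, smul_eq_mul]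
  by_cases hb : b = ψ :: v
  · subst hb
    simp [mul_comm]
  · rw [if_neg hb, if_neg (by simpa using hb), mul_zero]

lemma deltaE_level1 (pΨ : PsiOp A B → ZMod 2) (F : GBar k A B)
    (hF : ∀ t ∈ (F 1).support, t.length = 1 ∧ countG t = 1) :
    deltaE pΨ F 1 = 0 := by
  unfold deltaE
  rw [Finsupp.sum]
  refine Finset.sum_eq_zero fun t ht => ?_
  obtain ⟨h1, h2⟩ := hF t ht
  rcases List.length_eq_one_iff.mp h1 with ⟨b, rfl⟩
  have hb : b.length = 1 := by rw [countG_pair] at h2; exact h2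
  have hd : deltaB pΨ [b] = 0 := by
    unfold deltaB
    simp only [List.length_singleton]
    rw [Finset.sum_range_one]
    simp [List.getD_cons_zero, hb]
  rw [hd, smul_zero]

end Coeff
noncomputable section Coeff2
variable {k : Type} [Field k] {A B : SuperSpace k}

lemma expPsi_zero (ψ₀ : PsiOp A B) : (expPsi ψ₀ : GBar k A B) 0 = 0 := by
  unfold expPsi; simp

lemma expPsi_pos (ψ₀ : PsiOp A B) (n : ℕ) (h : n ≠ 0) :
    (expPsi ψ₀ : GBar k A B) n = Finsupp.single [List.replicate n ψ₀] 1 := by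
  unfold expPsi; rw [if_neg h]

lemma bparG_pair (pΨ : PsiOp A B → ZMod 2) (ψ : PsiOp A B) :
    bparG pΨ [[ψ]] = pΨ ψ + 1 := by
  simp [bparG, psiListPar_single]

open Classical in
lemma mulG_coeff (ψ₀ : PsiOp A B) (F : GBar k A B) (ψ : PsiOp A B)
    (v : List (PsiOp A B)) :
    mulG (expPsi ψ₀) F (v.length + 1) [[ψ], v] = if ψ₀ = ψ then F v.length [v] else 0 := by
  classical
  unfold mulG
  rw [Finsupp.finset_sum_apply]
  rw [Finset.sum_eq_single 1]
  · rw [Finsupp.sum_apply, expPsi_pos ψ₀ 1 one_ne_zero, Finsupp.sum_single_index]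
    · simp only [Nat.add_sub_cancel, one_mul, List.replicate_one]
      rw [Finsupp.sum_apply, Finsupp.sum]
      by_cases hψ : ψ₀ = ψ
      · subst hψ
        rw [if_pos rfl, ← one_mul (F v.length [v]), ← fsum_pick (F v.length) [v] 1]
        refine Finset.sum_congr rfl fun t' ht' => ?_
        rw [Finsupp.single_apply]
        by_cases h : t' = [v]
        · subst h; simp
        · rw [if_neg (by simp [h]), if_neg h]
      · rw [if_neg hψ]
        refine Finset.sum_eq_zero fun t' ht' => ?_
        rw [Finsupp.single_apply, if_neg]
        intro he
        exact hψ (by simpa using (List.cons.injEq _ _ _ _).mp he |>.1)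
    · rw [Finsupp.sum_apply, Finsupp.sum]
      refine Finset.sum_eq_zero fun t' ht' => ?_
      simp
  · intro m hm hne
    rw [Finsupp.sum_apply]
    by_cases hm0 : m = 0
    · subst hm0; rw [expPsi_zero]; simp
    · rw [expPsi_pos ψ₀ m hm0, Finsupp.sum_single_index]
      · rw [Finsupp.sum_apply, Finsupp.sum]
        refine Finset.sum_eq_zero fun t' ht' => ?_
        rw [Finsupp.single_apply, if_neg]
        intro he
        have h1 : List.replicate m ψ₀ = [ψ] := by
          have := (List.cons.injEq _ _ _ _).mp (by simpa using he) |>.1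
          exact this
        exact hne ((replicate_eq_single m ψ₀ ψ).mp h1).1
      · rw [Finsupp.sum_apply, Finsupp.sum]
        refine Finset.sum_eq_zero fun t' ht' => ?_
        simp
  · intro h
    exact absurd (Finset.mem_range.mpr (by omega)) h

open Classical in
lemma smulMulG_coeff (pΨ : PsiOp A B → ZMod 2) (ψ₀ : PsiOp A B) (F : GBar k A B)
    (hF : ∀ m, ∀ t ∈ (F m).support, countG t = m)
    (ψ : PsiOp A B) (v : List (PsiOp A B)) :
    smulMulG pΨ F (expPsi ψ₀) (v.length + 1) [[ψ], v]
      = if v = List.replicate v.length ψ₀ ∧ v ≠ [] then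
          gsign k (pΨ ψ + 1) * F 1 [[ψ]] else 0 := by
  classical
  unfold smulMulG
  rw [Finsupp.finset_sum_apply]
  rw [Finset.sum_eq_single 1]
  · rw [Finsupp.sum_apply, Finsupp.sum]
    simp only [Nat.add_sub_cancel]
    rcases eq_or_ne v [] with rfl | hv
    · rw [if_neg (by simp)]
      refine Finset.sum_eq_zero fun t ht => ?_
      rw [show (List.length ([] : List (PsiOp A B))) = 0 from rfl, expPsi_zero]
      simp
    · have hvlen : v.length ≠ 0 := by simpa using hv
      by_cases hrep : v = List.replicate v.length ψ₀
      · rw [if_pos ⟨hrep, hv⟩, ← fsum_pick (F 1) [[ψ]] (gsign k (pΨ ψ + 1))]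
        refine Finset.sum_congr rfl fun t ht => ?_
        rw [expPsi_pos ψ₀ v.length hvlen, Finsupp.sum_single_index (by simp),
          Finsupp.smul_apply, Finsupp.single_apply]
        by_cases h : t = [[ψ]]
        · subst h
          rw [if_pos rfl, if_pos (by rw [← hrep]; rfl), bparG_pair]
          simp [mul_comm]
        · rw [if_neg (fun he => h ((append_singleton_eq_pair t _ _ _).mp he).1), if_neg h, smul_zero]
      · rw [if_neg (fun hc => hrep hc.1)]
        refine Finset.sum_eq_zero fun t ht => ?_
        rw [expPsi_pos ψ₀ v.length hvlen, Finsupp.sum_single_index (by simp),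
          Finsupp.smul_apply, Finsupp.single_apply, if_neg, smul_zero]
        intro he
        exact hrep (((append_singleton_eq_pair t _ _ _).mp he).2.symm)
  · intro m hm hne
    rw [Finsupp.sum_apply, Finsupp.sum]
    refine Finset.sum_eq_zero fun t ht => ?_
    have hc := hF m t ht
    by_cases hq : v.length + 1 - m = 0
    · rw [hq, expPsi_zero]; simp
    · rw [expPsi_pos ψ₀ _ hq, Finsupp.sum_single_index (by simp),
        Finsupp.smul_apply, Finsupp.single_apply, if_neg, smul_zero]
      intro he
      have h1 : t = [[ψ]] := ((append_singleton_eq_pair t _ _ _).mp he).1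
      rw [h1, countG_pair] at hc
      simp at hc
      exact hne hc.symm
  · intro h
    exact absurd (Finset.mem_range.mpr (by omega)) h

end Coeff2

noncomputable section

variable {k : Type} [Field k]

/-- **Cocycles in `𝔤 ⊕ 𝔥 ⊕ Γ̄₁` are determined by their `Ψ`-linear part.**
If `ℓ = α + γ + Σ_{m>0} s⁻¹G_m` (with `G_m ∈ Ψ^{⊗m}`) is a cocycle for `d = δ + [ℓ₀,−]`
lying in `𝔤 ⊕ 𝔥 ⊕ Γ̄₁`, then for all `m ≥ 1`,
`G_m = Σ_{i=0}^{m-1} ψ₀^{⊗i} ⊗ G₁ ⊗ ψ₀^{⊗(m-1-i)}`;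
in particular if `G₁ = 0` then `ℓ ∈ 𝔤 ⊕ 𝔥`. -/
theorem cocycle_in_Gamma1_determined_by_G1
    (A B : SuperSpace k) (pg : Eop A → ZMod 2) (ph : Eop B → ZMod 2)
    (pΨ : PsiOp A B → ZMod 2) (α₀ : Eop A) (γ₀ : Eop B) (ψ₀ : PsiOp A B)
    (hA : AinfTriple pg ph pΨ α₀ γ₀ ψ₀)
    (ℓ : DefL k A B)
    (hΓ1 : ∀ n, ∀ t ∈ (ℓ.2.2 n).support, t.length = 1 ∧ countG t = n)
    (hcocycle : dL pg ph pΨ α₀ γ₀ (expPsi ψ₀) ℓ = 0) :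
    ∃ G1 : PsiOp A B →₀ k,
      (ℓ.2.2 1 = G1.sum fun ψ c => Finsupp.single [[ψ]] c) ∧
      (∀ m : ℕ, 1 ≤ m →
        ℓ.2.2 m =
          ∑ i ∈ Finset.range m, G1.sum fun ψ c =>
            Finsupp.single
              [List.replicate i ψ₀ ++ ψ :: List.replicate (m - 1 - i) ψ₀] c) ∧
      (G1 = 0 → ∀ n, ℓ.2.2 n = 0) := by

  classical
  set F := ℓ.2.2 with hFdef
  have h3 : (dL pg ph pΨ α₀ γ₀ (expPsi ψ₀) ℓ).2.2 = 0 := by rw [hcocycle]; rfl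
  have key : ∀ (ψ : PsiOp A B) (v : List (PsiOp A B)),
      deltaE pΨ F (v.length + 1) [[ψ], v] + mulG (expPsi ψ₀) F (v.length + 1) [[ψ], v]
        - smulMulG pΨ F (expPsi ψ₀) (v.length + 1) [[ψ], v] = 0 := by
    intro ψ v
    have h4 := congrFun h3 (v.length + 1)
    have h5 := DFunLike.congr_fun h4 [[ψ], v]
    unfold dL at h5
    simp only [Pi.add_apply, Pi.sub_apply, Pi.smul_apply, Finsupp.add_apply,
      Finsupp.sub_apply, Finsupp.smul_apply, Finsupp.coe_zero, Pi.zero_apply,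
      smul_eq_mul] at h5
    rw [← hFdef] at h5
    rw [actH_apply_two ph pΨ γ₀ F _ (fun t ht => (hΓ1 _ t ht).1) [[ψ], v] rfl,
      sActG_apply_two pg pΨ F α₀ _ (fun t ht => (hΓ1 _ t ht).1) [[ψ], v] rfl,
      actG_apply_two pg pΨ (expPsi ψ₀) ℓ.1 _ (fun t ht => (expPsi_support ψ₀ _ t ht).1) [[ψ], v] rfl,
      actH_apply_two ph pΨ ℓ.2.1 (expPsi ψ₀) _ (fun t ht => (expPsi_support ψ₀ _ t ht).1) [[ψ], v] rfl]
      at h5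
    simp only [mul_zero, add_zero, sub_zero] at h5
    linear_combination h5
  have hrec : ∀ (ψ : PsiOp A B) (v : List (PsiOp A B)), v ≠ [] →
      F (v.length + 1) [ψ :: v] = (if ψ₀ = ψ then F v.length [v] else 0)
        + (if v = List.replicate v.length ψ₀ then F 1 [[ψ]] else 0) := by
    intro ψ v hv
    have h5 := key ψ v
    rw [deltaE_coeff pΨ F _ (fun t ht => (hΓ1 _ t ht).1) ψ v hv,
      mulG_coeff ψ₀ F ψ v,
      smulMulG_coeff pΨ ψ₀ F (fun m t ht => (hΓ1 m t ht).2) ψ v] at h5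
    by_cases hψ : ψ₀ = ψ
    · subst hψ
      rw [if_pos rfl] at h5
      rw [if_pos rfl]
      rw [hA.2.2.1, zero_add, gsign_one] at h5
      by_cases hrep : v = List.replicate v.length ψ₀
      · rw [if_pos ⟨hrep, hv⟩] at h5
        rw [if_pos hrep]
        linear_combination -h5
      · rw [if_neg (fun hc => hrep hc.1)] at h5
        rw [if_neg hrep]
        linear_combination -h5
    · rw [if_neg hψ] at h5
      rw [if_neg hψ]
      by_cases hrep : v = List.replicate v.length ψ₀
      · rw [if_pos ⟨hrep, hv⟩] at h5
        rw [if_pos hrep]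
        have h6 : gsign k (pΨ ψ + 1) * F (v.length + 1) [ψ :: v]
            = gsign k (pΨ ψ + 1) * F 1 [[ψ]] := by linear_combination h5
        rw [zero_add]
        exact mul_left_cancel₀ (gsign_ne_zero _) h6
      · rw [if_neg (fun hc => hrep hc.1)] at h5
        rw [if_neg hrep]
        have h6 : gsign k (pΨ ψ + 1) * F (v.length + 1) [ψ :: v]
            = gsign k (pΨ ψ + 1) * 0 := by linear_combination h5
        rw [zero_add]
        exact mul_left_cancel₀ (gsign_ne_zero _) h6
  have hF0 : F 0 = 0 := by
    have h5 := key ψ₀ []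
    rw [mulG_coeff ψ₀ F ψ₀ [],
      smulMulG_coeff pΨ ψ₀ F (fun m t ht => (hΓ1 m t ht).2) ψ₀ []] at h5
    rw [if_pos rfl, if_neg (by simp)] at h5
    have h7 : deltaE pΨ F ((List.nil : List (PsiOp A B)).length + 1) [[ψ₀], []] = 0 := by
      have := deltaE_level1 pΨ F (hΓ1 1)
      simp only [List.length_nil, zero_add, this, Finsupp.coe_zero, Pi.zero_apply]
    rw [h7, zero_add, sub_zero] at h5
    ext t
    rw [Finsupp.coe_zero, Pi.zero_apply]
    by_cases ht : t ∈ (F 0).support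
    · obtain ⟨h1, h2⟩ := hΓ1 0 t ht
      rcases List.length_eq_one_iff.mp h1 with ⟨b, rfl⟩
      rw [countG_pair] at h2
      rw [List.length_eq_zero_iff.mp h2]
      exact h5
    · exact Finsupp.notMem_support_iff.mp ht
  have hinj : Function.Injective (fun ψ : PsiOp A B => ([[ψ]] : GBasis A B)) := by
    intro a b h; simpa using h
  have hrange : ↑(F 1).support ⊆ Set.range (fun ψ : PsiOp A B => ([[ψ]] : GBasis A B)) := by
    intro t ht
    obtain ⟨h1, h2⟩ := hΓ1 1 t ht
    rcases List.length_eq_one_iff.mp h1 with ⟨b, rfl⟩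
    rw [countG_pair] at h2
    rcases List.length_eq_one_iff.mp h2 with ⟨ψ, rfl⟩
    exact ⟨ψ, rfl⟩
  set G1 := Finsupp.comapDomain (fun ψ : PsiOp A B => ([[ψ]] : GBasis A B)) (F 1)
    hinj.injOn with hG1def
  have hG1app : ∀ ψ : PsiOp A B, G1 ψ = F 1 [[ψ]] := fun ψ => rfl
  have hF1 : F 1 = G1.sum fun ψ c => Finsupp.single [[ψ]] c := by
    have h := Finsupp.mapDomain_comapDomain
      (f := fun ψ : PsiOp A B => ([[ψ]] : GBasis A B)) hinj (F 1) hrange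
    rw [← h]
    rfl
  have hmain : ∀ m : ℕ, 1 ≤ m → F m = ∑ i ∈ Finset.range m, G1.sum fun ψ c =>
      Finsupp.single [List.replicate i ψ₀ ++ ψ :: List.replicate (m - 1 - i) ψ₀] c := by
    intro m
    induction m with
    | zero => intro h; omega
    | succ p ih =>
      intro _
      rcases Nat.eq_zero_or_pos p with rfl | hp
      · rw [Finset.sum_range_one]
        simpa using hF1
      · have hih := ih hp
        ext t
        by_cases ht : ∃ b : List (PsiOp A B), t = [b] ∧ b.length = p + 1
        · obtain ⟨b, rfl, hb⟩ := ht
          rcases b with _ | ⟨ψ, v⟩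
          · simp at hb
          · have hvlen : v.length = p := by simpa using hb
            have hvne : v ≠ [] := by
              intro h; rw [h] at hvlen; simp at hvlen; omega
            have hrecv := hrec ψ v hvne
            rw [hvlen] at hrecv
            rw [hrecv]
            rw [Finsupp.finset_sum_apply, Finset.sum_range_succ']
            simp only [Nat.add_sub_cancel, Nat.sub_zero, List.replicate_zero,
              List.nil_append]
            have hf0 : (G1.sum fun ψ' c =>
                Finsupp.single [ψ' :: List.replicate p ψ₀] c) [ψ :: v]
                = (if v = List.replicate p ψ₀ then F 1 [[ψ]] else 0) := by
              rw [Finsupp.sum_apply, Finsupp.sum]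
              by_cases hrep : v = List.replicate p ψ₀
              · rw [if_pos hrep, ← hG1app ψ, ← one_mul (G1 ψ), ← fsum_pick G1 ψ 1]
                refine Finset.sum_congr rfl fun ψ' _ => ?_
                rw [Finsupp.single_apply]
                by_cases h : ψ' = ψ
                · subst h
                  rw [if_pos (by rw [hrep]), if_pos rfl, one_mul]
                · rw [if_neg, if_neg h]
                  intro he
                  apply h
                  exact ((List.cons.injEq _ _ _ _).mp
                    ((List.cons.injEq _ _ _ _).mp he).1).1
              · rw [if_neg hrep]
                refine Finset.sum_eq_zero fun ψ' _ => ?_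
                rw [Finsupp.single_apply, if_neg]
                intro he
                apply hrep
                have h1 : ψ' :: List.replicate p ψ₀ = ψ :: v :=
                  ((List.cons.injEq _ _ _ _).mp he).1
                exact (((List.cons.injEq _ _ _ _).mp h1).2).symm
            have hfs : (∑ i ∈ Finset.range p, (G1.sum fun ψ' c =>
                Finsupp.single
                  [List.replicate (i + 1) ψ₀ ++ ψ' :: List.replicate (p - (i + 1)) ψ₀]
                  c) [ψ :: v])
                = (if ψ₀ = ψ then F p [v] else 0) := by
              by_cases hψ : ψ₀ = ψ
              · subst hψ
                rw [if_pos rfl]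
                have h6 := congrArg (fun G : (GBasis A B) →₀ k => G [v]) hih
                rw [h6, Finsupp.finset_sum_apply]
                refine Finset.sum_congr rfl fun i hi => ?_
                simp only [Finsupp.sum_apply, Finsupp.sum, Finsupp.finset_sum_apply]
                refine Finset.sum_congr rfl fun ψ' _ => ?_
                simp only [Finsupp.single_apply]
                have hidx : p - (i + 1) = p - 1 - i := by omega
                rw [hidx, List.replicate_succ, List.cons_append]
                refine if_congr ?_ rfl rfl
                simp
              · rw [if_neg hψ]
                refine Finset.sum_eq_zero fun i _ => ?_
                rw [Finsupp.sum_apply, Finsupp.sum]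
                refine Finset.sum_eq_zero fun ψ' _ => ?_
                rw [Finsupp.single_apply, if_neg]
                intro he
                apply hψ
                rw [List.replicate_succ, List.cons_append] at he
                have h1 := ((List.cons.injEq _ _ _ _).mp he).1
                exact ((List.cons.injEq _ _ _ _).mp h1).1
            rw [hfs, hf0]
        · have hL : F (p + 1) t = 0 := by
            by_cases htm : t ∈ (F (p + 1)).support
            · exfalso
              obtain ⟨h1, h2⟩ := hΓ1 (p + 1) t htm
              rcases List.length_eq_one_iff.mp h1 with ⟨b, rfl⟩
              rw [countG_pair] at h2
              exact ht ⟨b, rfl, h2⟩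
            · exact Finsupp.notMem_support_iff.mp htm
          rw [hL, Finsupp.finset_sum_apply]
          symm
          refine Finset.sum_eq_zero fun i hi => ?_
          rw [Finsupp.sum_apply, Finsupp.sum]
          refine Finset.sum_eq_zero fun ψ' _ => ?_
          rw [Finsupp.single_apply, if_neg]
          intro he
          apply ht
          refine ⟨List.replicate i ψ₀ ++ ψ' :: List.replicate (p + 1 - 1 - i) ψ₀, he.symm, ?_⟩
          have hi' := Finset.mem_range.mp hi
          simp only [List.length_append, List.length_cons, List.length_replicate]
          omega
  refine ⟨G1, hF1, hmain, fun hG1 n => ?_⟩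
  cases n with
  | zero => exact hF0
  | succ q =>
    rw [hmain (q + 1) (by omega), hG1]
    simp [Finsupp.sum_zero_index]

end
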